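/- Let U ⊆ ℝ² be open, X : U → ℝ³ a C² immersion with ⟨∂_s X, ∂_t X⟩ = 0, and N := (∂_s X × ∂_t X)/|∂_s X × ∂_t X| its unit normal; assume the coordinates are curvature lines: ∂_s N = λ ∂_s X and ∂_t N = μ ∂_t X for functions λ, μ : U → ℝ. Set Y := X − ⟨X,N⟩N and X̄ := (N,Y). Then the coefficients of the metric induced on the normal congruence by the neutral metric 𝔾 of TS² are Ē := 𝔾(∂_s X̄, ∂_s X̄) = 0, Ḡ := 𝔾(∂_t X̄, ∂_t X̄) = 0, and F̄ := 𝔾(∂_s X̄, ∂_t X̄) = (μ − λ)⟨N × ∂_s X, ∂_t X⟩ = (μ − λ) |∂_s X| |∂_t X|; consequently the 𝔾-area element of the congruence is √|ĒḠ − F̄²| = |λ − μ| |∂_s X| |∂_t X|, i.e. |λ − μ| times the Euclidean area element of X. (This proves that the 𝔾-area of the normal congruence equals the integral over the surface of the absolute difference of its principal curvatures, which is 2√(H² − K) for mean curvature H = (λ+μ)/2 and Gauss curvature K = λμ.) -/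

import Mathlib

noncomputable section

open Real

/-- Partial derivative of `f : ℝ² → E` in the first coordinate direction (the `s`-direction). -/
def pd1 {E : Type*} [NormedAddCommGroup E] [NormedSpace ℝ E]
    (f : ℝ × ℝ → E) (p : ℝ × ℝ) : E := fderiv ℝ f p (1, 0)

/-- Partial derivative of `f : ℝ² → E` in the second coordinate direction (the `t`-direction). -/
def pd2 {E : Type*} [NormedAddCommGroup E] [NormedSpace ℝ E]
    (f : ℝ × ℝ → E) (p : ℝ × ℝ) : E := fderiv ℝ f p (0, 1)

/-- Euclidean inner product on ℝ³. -/
def dot3 (v w : Fin 3 → ℝ) : ℝ := v 0 * w 0 + v 1 * w 1 + v 2 * w 2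

/-- Cross product on ℝ³. -/
def cross3 (v w : Fin 3 → ℝ) : Fin 3 → ℝ :=
  ![v 1 * w 2 - v 2 * w 1, v 2 * w 0 - v 0 * w 2, v 0 * w 1 - v 1 * w 0]

/-- Euclidean norm on ℝ³. -/
def norm3 (v : Fin 3 → ℝ) : ℝ := Real.sqrt (dot3 v v)

/-- Normalization of a vector of ℝ³. -/
def unit3 (v : Fin 3 → ℝ) : Fin 3 → ℝ := (norm3 v)⁻¹ • v

/-- The neutral metric of `TS²` at the point `(N,·)`, evaluated on tangent vectors written
as pairs `ξ = (Pξ, ξ₂)`: `𝔾(ξ,η) = ⟨N × Kξ, Pη⟩ − ⟨N × Pξ, Kη⟩`, where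
`Kξ = ξ₂ − ⟨ξ₂,N⟩N`. -/
def Gcong (N : Fin 3 → ℝ) (ξ η : (Fin 3 → ℝ) × (Fin 3 → ℝ)) : ℝ :=
  dot3 (cross3 N (ξ.2 - dot3 ξ.2 N • N)) η.1 - dot3 (cross3 N ξ.1) (η.2 - dot3 η.2 N • N)

/-!
In curvature-line coordinates `∂N = λ ∂X` along `s` and `∂N = μ ∂X` along `t`, so differentiating
`Y = X − ⟨X,N⟩N` gives `∂_s Y = (1 − ρλ) ∂_s X + (⋯) N` and `∂_t Y = (1 − ρμ) ∂_t X + (⋯) N`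
with `ρ = ⟨X,N⟩`. The neutral metric only sees the component of the second slot orthogonal to
`N`, and on pairs of this shape it is `𝔾((l a, α a + ⋯), (m b, γ b + ⋯)) = (α m − l γ)⟨N × a, b⟩`.
This vanishes on the diagonal, and off it the `ρ`-terms cancel, leaving `(μ − λ)⟨N × ∂_s X, ∂_t X⟩`.
Finally `⟨N × ∂_s X, ∂_t X⟩ = ⟨N, ∂_s X × ∂_t X⟩ = |∂_s X × ∂_t X| = |∂_s X||∂_t X|` by
orthogonality of the coordinates.
-/

open scoped Matrix

theorem dot3_eq_dotProduct (v w : Fin 3 → ℝ) : dot3 v w = v ⬝ᵥ w := by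
  simp [dot3, dotProduct, Fin.sum_univ_three]

theorem cross3_eq_crossProduct (v w : Fin 3 → ℝ) : cross3 v w = v ⨯₃ w := rfl

theorem dot3_self_nonneg (v : Fin 3 → ℝ) : 0 ≤ dot3 v v := by
  simpa [dot3_eq_dotProduct] using dotProduct_self_star_nonneg v

theorem dot3_self_pos {v : Fin 3 → ℝ} (hv : v ≠ 0) : 0 < dot3 v v :=
  (dot3_self_nonneg v).lt_of_ne' (by rwa [dot3_eq_dotProduct, Ne, dotProduct_self_eq_zero])

theorem norm3_nonneg (v : Fin 3 → ℝ) : 0 ≤ norm3 v := Real.sqrt_nonneg _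

theorem norm3_sq (v : Fin 3 → ℝ) : norm3 v ^ 2 = dot3 v v := Real.sq_sqrt (dot3_self_nonneg v)

theorem dot3_unit3_self (w : Fin 3 → ℝ) : dot3 (unit3 w) w = norm3 w := by
  rw [unit3, dot3_eq_dotProduct, smul_dotProduct, ← dot3_eq_dotProduct, ← norm3_sq, smul_eq_mul,
    sq, ← mul_assoc, inv_mul_mul_self]

theorem norm3_cross3_of_dot3_eq_zero {u v : Fin 3 → ℝ} (huv : dot3 u v = 0) :
    norm3 (cross3 u v) = norm3 u * norm3 v := by
  have hlagrange : dot3 (cross3 u v) (cross3 u v) = dot3 u u * dot3 v v := by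
    simp only [dot3_eq_dotProduct, cross3_eq_crossProduct, cross_dot_cross] at huv ⊢
    rw [huv, dotProduct_comm v u, huv]
    ring
  rw [norm3, hlagrange, Real.sqrt_mul (dot3_self_nonneg u), norm3, norm3]

theorem dot3_cross3_unit3_cross3 (u v : Fin 3 → ℝ) :
    dot3 (cross3 (unit3 (cross3 u v)) u) v = norm3 (cross3 u v) := by
  rw [← dot3_unit3_self]
  simp only [dot3_eq_dotProduct, cross3_eq_crossProduct]
  rw [dotProduct_comm, triple_product_permutation]

theorem Gcong_smul_add_smul (n a b : Fin 3 → ℝ) (l m α β γ δ : ℝ) :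
    Gcong n (l • a, α • a + β • n) (m • b, γ • b + δ • n)
      = (α * m - l * γ) * dot3 (cross3 n a) b := by
  simp only [Gcong, dot3, cross3, Pi.add_apply, Pi.smul_apply, smul_eq_mul, Pi.sub_apply,
    Matrix.cons_val_zero, Matrix.cons_val_one, Matrix.cons_val]
  ring

section Differentiability

variable {E : Type*} [NormedAddCommGroup E] [NormedSpace ℝ E]

theorem DifferentiableAt.dot3 {f g : E → Fin 3 → ℝ} {p : E}
    (hf : DifferentiableAt ℝ f p) (hg : DifferentiableAt ℝ g p) :
    DifferentiableAt ℝ (fun q => dot3 (f q) (g q)) p := by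
  unfold _root_.dot3
  fun_prop

theorem DifferentiableAt.cross3 {f g : E → Fin 3 → ℝ} {p : E}
    (hf : DifferentiableAt ℝ f p) (hg : DifferentiableAt ℝ g p) :
    DifferentiableAt ℝ (fun q => cross3 (f q) (g q)) p := by
  rw [differentiableAt_pi]
  intro i
  fin_cases i <;> simp [_root_.cross3] <;> fun_prop

theorem differentiableAt_unit3 {v : Fin 3 → ℝ} (hv : v ≠ 0) : DifferentiableAt ℝ unit3 v := by
  have hnorm : DifferentiableAt ℝ norm3 v :=
    (differentiableAt_id.dot3 differentiableAt_id).sqrt (dot3_self_pos hv).ne'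
  exact (hnorm.inv (Real.sqrt_pos.2 (dot3_self_pos hv)).ne').smul differentiableAt_id

theorem ContDiffAt.differentiableAt_fderiv_apply {F : Type*} [NormedAddCommGroup F]
    [NormedSpace ℝ F] {f : E → F} {p : E} (hf : ContDiffAt ℝ 2 f p) (v : E) :
    DifferentiableAt ℝ (fun q => fderiv ℝ f q v) p :=
  ((hf.fderiv_right (m := 1) (by norm_num)).differentiableAt one_ne_zero).clm_apply
    (differentiableAt_const v)

theorem ContDiffAt.differentiableAt_unit3_cross3_fderiv {X : E → Fin 3 → ℝ} {p : E}
    (hX : ContDiffAt ℝ 2 X p) (u v : E) (h : cross3 (fderiv ℝ X p u) (fderiv ℝ X p v) ≠ 0) :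
    DifferentiableAt ℝ (fun q => unit3 (cross3 (fderiv ℝ X q u) (fderiv ℝ X q v))) p :=
  DifferentiableAt.comp (g := unit3) p (differentiableAt_unit3 h)
    ((hX.differentiableAt_fderiv_apply u).cross3 (hX.differentiableAt_fderiv_apply v))

theorem fderiv_dot3_apply {f g : E → Fin 3 → ℝ} {p : E}
    (hf : DifferentiableAt ℝ f p) (hg : DifferentiableAt ℝ g p) (v : E) :
    fderiv ℝ (fun q => dot3 (f q) (g q)) p v
      = dot3 (fderiv ℝ f p v) (g p) + dot3 (f p) (fderiv ℝ g p v) := by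
  have hf' (i : Fin 3) : DifferentiableAt ℝ (fun q => f q i) p := by fun_prop
  have hg' (i : Fin 3) : DifferentiableAt ℝ (fun q => g q i) p := by fun_prop
  simp only [_root_.dot3]
  rw [fderiv_fun_add (by fun_prop) (by fun_prop), fderiv_fun_add (by fun_prop) (by fun_prop)]
  simp only [fderiv_fun_mul (hf' _) (hg' _), fderiv_apply hf, fderiv_apply hg]
  simp only [add_apply, smul_apply, ContinuousLinearMap.comp_apply,
    ContinuousLinearMap.proj_apply, smul_eq_mul]
  ring

theorem exists_fderiv_sub_dot3_smul_eq {X N : E → Fin 3 → ℝ} {p v : E} {c : ℝ}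
    (hX : DifferentiableAt ℝ X p) (hN : DifferentiableAt ℝ N p)
    (hc : fderiv ℝ N p v = c • fderiv ℝ X p v) :
    ∃ β : ℝ, fderiv ℝ (fun q => X q - dot3 (X q) (N q) • N q) p v
      = (1 - dot3 (X p) (N p) * c) • fderiv ℝ X p v + β • N p := by
  refine ⟨-(dot3 (fderiv ℝ X p v) (N p) + dot3 (X p) (fderiv ℝ N p v)), ?_⟩
  rw [fderiv_fun_sub hX ((hX.dot3 hN).fun_smul hN), fderiv_fun_smul (hX.dot3 hN) hN]
  simp only [sub_apply, add_apply, smul_apply, ContinuousLinearMap.smulRight_apply,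
    fderiv_dot3_apply hX hN, hc]
  module

end Differentiability

/-- For a C² immersion `X` with orthogonal curvature-line coordinates, unit normal
`N = (∂_s X × ∂_t X)/|∂_s X × ∂_t X|` and normal congruence `X̄ = (N, Y)`,
`Y = X − ⟨X,N⟩N`, the induced metric coefficients are `Ē = Ḡ = 0` and
`F̄ = (μ−λ)⟨N × ∂_s X, ∂_t X⟩ = (μ−λ)|∂_s X||∂_t X|`; hence the `𝔾`-area element
`√|ĒḠ − F̄²|` equals `|λ−μ| |∂_s X| |∂_t X|`. -/
theorem normal_congruence_area_element (U : Set (ℝ × ℝ)) (hU : IsOpen U)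
    (X N : ℝ × ℝ → Fin 3 → ℝ) (lam mu : ℝ × ℝ → ℝ)
    (hX : ContDiffOn ℝ 2 X U)
    (horth : ∀ p ∈ U, dot3 (pd1 X p) (pd2 X p) = 0)
    (himm : ∀ p ∈ U, cross3 (pd1 X p) (pd2 X p) ≠ 0)
    (hN : ∀ p ∈ U, N p = unit3 (cross3 (pd1 X p) (pd2 X p)))
    (hlam : ∀ p ∈ U, pd1 N p = lam p • pd1 X p)
    (hmu : ∀ p ∈ U, pd2 N p = mu p • pd2 X p)
    (Y : ℝ × ℝ → Fin 3 → ℝ) (hY : ∀ q, Y q = X q - dot3 (X q) (N q) • N q) :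
    ∀ p ∈ U,
      Gcong (N p) (pd1 N p, pd1 Y p) (pd1 N p, pd1 Y p) = 0 ∧
      Gcong (N p) (pd2 N p, pd2 Y p) (pd2 N p, pd2 Y p) = 0 ∧
      Gcong (N p) (pd1 N p, pd1 Y p) (pd2 N p, pd2 Y p)
          = (mu p - lam p) * dot3 (cross3 (N p) (pd1 X p)) (pd2 X p) ∧
      Gcong (N p) (pd1 N p, pd1 Y p) (pd2 N p, pd2 Y p)
          = (mu p - lam p) * (norm3 (pd1 X p) * norm3 (pd2 X p)) ∧
      Real.sqrt |Gcong (N p) (pd1 N p, pd1 Y p) (pd1 N p, pd1 Y p)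
            * Gcong (N p) (pd2 N p, pd2 Y p) (pd2 N p, pd2 Y p)
            - (Gcong (N p) (pd1 N p, pd1 Y p) (pd2 N p, pd2 Y p)) ^ 2|
          = |lam p - mu p| * (norm3 (pd1 X p) * norm3 (pd2 X p)) := by
  intro p hp
  have hXp : ContDiffAt ℝ 2 X p := hX.contDiffAt (hU.mem_nhds hp)
  have hNp : DifferentiableAt ℝ N p :=
    (hXp.differentiableAt_unit3_cross3_fderiv (1, 0) (0, 1) (himm p hp)).congr_of_eventuallyEq
      (Filter.eventuallyEq_of_mem (hU.mem_nhds hp) hN)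
  obtain ⟨β, hYs⟩ : ∃ β : ℝ, pd1 Y p = (1 - dot3 (X p) (N p) * lam p) • pd1 X p + β • N p := by
    rw [funext hY]
    exact exists_fderiv_sub_dot3_smul_eq (hXp.differentiableAt two_ne_zero) hNp (hlam p hp)
  obtain ⟨δ, hYt⟩ : ∃ δ : ℝ, pd2 Y p = (1 - dot3 (X p) (N p) * mu p) • pd2 X p + δ • N p := by
    rw [funext hY]
    exact exists_fderiv_sub_dot3_smul_eq (hXp.differentiableAt two_ne_zero) hNp (hmu p hp)
  have hE : Gcong (N p) (pd1 N p, pd1 Y p) (pd1 N p, pd1 Y p) = 0 := by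
    rw [hlam p hp, hYs, Gcong_smul_add_smul]; ring
  have hG : Gcong (N p) (pd2 N p, pd2 Y p) (pd2 N p, pd2 Y p) = 0 := by
    rw [hmu p hp, hYt, Gcong_smul_add_smul]; ring
  have hF : Gcong (N p) (pd1 N p, pd1 Y p) (pd2 N p, pd2 Y p)
      = (mu p - lam p) * dot3 (cross3 (N p) (pd1 X p)) (pd2 X p) := by
    rw [hlam p hp, hmu p hp, hYs, hYt, Gcong_smul_add_smul]; ring
  have hFnorm : Gcong (N p) (pd1 N p, pd1 Y p) (pd2 N p, pd2 Y p)
      = (mu p - lam p) * (norm3 (pd1 X p) * norm3 (pd2 X p)) := by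
    rw [hF, hN p hp, dot3_cross3_unit3_cross3, norm3_cross3_of_dot3_eq_zero (horth p hp)]
  refine ⟨hE, hG, hF, hFnorm, ?_⟩
  rw [hE, hG, hFnorm, zero_mul, zero_sub, abs_neg, abs_sq, Real.sqrt_sq_eq_abs, abs_mul,
    abs_sub_comm, abs_of_nonneg (mul_nonneg (norm3_nonneg _) (norm3_nonneg _))]
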